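/- Let n be a positive integer and let p be a monic real polynomial of degree n. Then max_{x ∈ [-1,1]} |p(x)| ≥ 2^{1-n}, and equality holds if and only if p(x) = 2^{1-n}·T_n(x), where T_n is the n-th Chebyshev polynomial of the first kind. -/

import Mathlib

/-!
Rescale: if `|p| ≤ B` on `[-1, 1]` with `B > 0`, then `p / B` is bounded by `1` there, so by
Mathlib's extremal property of `T_n` its `n`-th coefficient is at most `2 ^ (n - 1)`, with equality
only for `T_n` itself. For monic `p` of degree `n` that coefficient is `B⁻¹`, and the maximum of
`|p|` on `[-1, 1]` is such a bound.
-/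

open Polynomial Set

theorem forall_abs_eval_C_inv_mul_le_one {s : Set ℝ} {P : ℝ[X]} {B : ℝ} (hB : 0 < B)
    (hPbnd : ∀ x ∈ s, |P.eval x| ≤ B) : ∀ x ∈ s, |(C B⁻¹ * P).eval x| ≤ 1 := fun x hx => by
  rw [eval_mul, eval_C, abs_mul, abs_inv, abs_of_pos hB, inv_mul_le_one₀ hB]
  exact hPbnd x hx

namespace Polynomial.Chebyshev

theorem coeff_le_mul_of_forall_abs_le {n : ℕ} {P : ℝ[X]} {B : ℝ} (hB : 0 < B)
    (hPdeg : P.degree ≤ n) (hPbnd : ∀ x ∈ Icc (-1) 1, |P.eval x| ≤ B) :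
    P.coeff n ≤ B * 2 ^ (n - 1) := by
  have hscaled := coeff_le_of_forall_abs_le_one
    ((degree_C_mul (inv_ne_zero hB.ne')).trans_le hPdeg)
    (forall_abs_eval_C_inv_mul_le_one hB hPbnd)
  rwa [coeff_C_mul, inv_mul_le_iff₀ hB] at hscaled

theorem coeff_eq_mul_iff_of_forall_abs_le {n : ℕ} {P : ℝ[X]} {B : ℝ} (hB : 0 < B)
    (hPdeg : P.degree ≤ n) (hPbnd : ∀ x ∈ Icc (-1) 1, |P.eval x| ≤ B) :
    P.coeff n = B * 2 ^ (n - 1) ↔ P = Polynomial.C B * T ℝ n := by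
  have hscaled := coeff_eq_iff_of_forall_abs_le_one
    ((degree_C_mul (inv_ne_zero hB.ne')).trans_le hPdeg)
    (forall_abs_eval_C_inv_mul_le_one hB hPbnd)
  rwa [coeff_C_mul, inv_mul_eq_iff_eq_mul₀ hB.ne',
    ← (mul_right_injective₀ (C_ne_zero.mpr hB.ne')).eq_iff, ← mul_assoc, ← Polynomial.C_mul,
    mul_inv_cancel₀ hB.ne', C_1, one_mul] at hscaled

end Polynomial.Chebyshev

theorem abs_eval_le_sSup_Icc (p : ℝ[X]) {a b x : ℝ} (hx : x ∈ Icc a b) :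
    |p.eval x| ≤ sSup ((fun x : ℝ => |p.eval x|) '' Icc a b) :=
  le_csSup (isCompact_Icc.bddAbove_image p.continuous.abs.continuousOn) ⟨x, hx, rfl⟩

theorem sSup_abs_eval_Icc_pos {p : ℝ[X]} (hp : p ≠ 0) {a b : ℝ} (hab : a < b) :
    0 < sSup ((fun x : ℝ => |p.eval x|) '' Icc a b) := by
  obtain ⟨x, hx, hpx⟩ : ∃ x ∈ Icc a b, p.eval x ≠ 0 := by
    by_contra! h
    exact hp (p.eq_zero_of_infinite_isRoot ((Icc_infinite hab).mono h))
  exact (abs_pos.mpr hpx).trans_le (abs_eval_le_sSup_Icc p hx)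

theorem two_zpow_one_sub_mul_two_pow_pred {n : ℕ} (hn : 1 ≤ n) :
    (2 : ℝ) ^ ((1 : ℤ) - n) * 2 ^ (n - 1) = 1 := by
  rw [← zpow_natCast, Nat.cast_sub hn, ← zpow_add₀ two_ne_zero]
  norm_num

theorem chebyshev_minimal_deviation
    (n : ℕ) (hn : 1 ≤ n) (p : Polynomial ℝ)
    (hmonic : p.Monic) (hdeg : p.natDegree = n) :
    (2 : ℝ) ^ ((1 : ℤ) - (n : ℤ)) ≤
        sSup ((fun x : ℝ => |p.eval x|) '' Set.Icc (-1 : ℝ) 1) ∧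
      (sSup ((fun x : ℝ => |p.eval x|) '' Set.Icc (-1 : ℝ) 1) =
          (2 : ℝ) ^ ((1 : ℤ) - (n : ℤ)) ↔
        p = Polynomial.C ((2 : ℝ) ^ ((1 : ℤ) - (n : ℤ))) *
              Polynomial.Chebyshev.T ℝ (n : ℤ)) := by
  set M := sSup ((fun x : ℝ => |p.eval x|) '' Icc (-1 : ℝ) 1)
  set c : ℝ := 2 ^ ((1 : ℤ) - n)
  have hM : 0 < M := sSup_abs_eval_Icc_pos hmonic.ne_zero (by norm_num)
  have hbound : ∀ x ∈ Icc (-1 : ℝ) 1, |p.eval x| ≤ M := fun x hx => abs_eval_le_sSup_Icc p hx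
  have hpdeg : p.degree ≤ n := hdeg ▸ degree_le_natDegree
  have hcoeff : p.coeff n = 1 := hdeg ▸ hmonic.coeff_natDegree
  have hc : c * 2 ^ (n - 1) = 1 := two_zpow_one_sub_mul_two_pow_pred hn
  have hcM : c ≤ M := by
    have h := Chebyshev.coeff_le_mul_of_forall_abs_le hM hpdeg hbound
    rw [hcoeff] at h
    calc c = c * 1 := (mul_one c).symm
      _ ≤ c * (M * 2 ^ (n - 1)) := by gcongr
      _ = M := by rw [mul_left_comm, hc, mul_one]
  refine ⟨hcM, ⟨fun hMc => ?_, fun hp => le_antisymm ?_ hcM⟩⟩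
  · rw [← hMc, ← Chebyshev.coeff_eq_mul_iff_of_forall_abs_le hM hpdeg hbound, hcoeff, hMc, hc]
  · refine csSup_le ((nonempty_Icc.mpr (by norm_num)).image _) ?_
    rintro _ ⟨x, hx, rfl⟩
    dsimp only
    rw [hp, eval_mul, eval_C, abs_mul, abs_of_pos (by positivity)]
    exact mul_le_of_le_one_right (by positivity)
      (Chebyshev.abs_eval_T_real_le_one n (abs_le.mpr hx))
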